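/- Let G be a graph, let M be a maximal matching of G, let M' ⊆ M be any subset of M, let V' := V(M') and U := V ∖ V(M), and let H := G[V', U]. Then for every matching S of H, μ(G) ≥ |M| + |S| − |M'|. Consequently, μ(G) ≥ |M| + max{0, μ(H) − |M'|}. -/

import Mathlib

open scoped Classical

noncomputable section

variable {V : Type*}

/-- `M` is a matching of `G`: a set of edges of `G` that are pairwise vertex-disjoint. -/
def IsMatchingSet (G : SimpleGraph V) (M : Set (Sym2 V)) : Prop :=
  M ⊆ G.edgeSet ∧ M.Pairwise fun e f => ∀ v : V, v ∈ e → v ∉ f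

/-- The set of vertices matched by the edge set `M`. -/
def mVerts (M : Set (Sym2 V)) : Set V := {v | ∃ e ∈ M, v ∈ e}

/-- The matching number of `G`. -/
def nu (G : SimpleGraph V) : ℕ :=
  sSup {n | ∃ M : Set (Sym2 V), IsMatchingSet G M ∧ M.ncard = n}

/-- The bipartite subgraph of `G` consisting of the edges of `G` with one endpoint in `X`
and the other endpoint in `Y`. -/
def between (G : SimpleGraph V) (X Y : Set V) : SimpleGraph V where
  Adj u v := G.Adj u v ∧ ((u ∈ X ∧ v ∈ Y) ∨ (u ∈ Y ∧ v ∈ X))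
  symm := ⟨fun u v h => ⟨h.1.symm, h.2.elim (fun hh => Or.inr ⟨hh.2, hh.1⟩) (fun hh => Or.inl ⟨hh.2, hh.1⟩)⟩⟩
  loopless := ⟨fun v h => G.loopless.1 v h.1⟩

/-- The induced subgraph of `G` on the vertex set `U` (on the same vertex type). -/
def inducedOn (G : SimpleGraph V) (U : Set V) : SimpleGraph V where
  Adj u v := G.Adj u v ∧ u ∈ U ∧ v ∈ U
  symm := ⟨fun u v h => ⟨h.1.symm, h.2.2, h.2.1⟩⟩
  loopless := ⟨fun v h => G.loopless.1 v h.1⟩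

/-- The degree of `v` in `H`. -/
def deg (H : SimpleGraph V) (v : V) : ℕ := (H.neighborSet v).ncard

/-- `H` is a `(β, βm)`-EDCS of `G`. -/
def IsEDCS (G H : SimpleGraph V) (β βm : ℝ) : Prop :=
  H ≤ G ∧ (∀ u v, H.Adj u v → (deg H u + deg H v : ℝ) ≤ β) ∧
    (∀ u v, G.Adj u v → ¬ H.Adj u v → βm ≤ (deg H u + deg H v : ℝ))

/-- The neighborhood of a set `A` in `H`. -/
def nbhd (H : SimpleGraph V) (A : Set V) : Set V := {v | ∃ a ∈ A, H.Adj a v}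

/-- The edges of `M` with one endpoint in `X` and the other endpoint in `Y`. -/
def crossE (M : Set (Sym2 V)) (X Y : Set V) : Set (Sym2 V) :=
  {e | e ∈ M ∧ ∃ u v, e = s(u, v) ∧ u ∈ X ∧ v ∈ Y}

/-- `M` is a maximal matching of `G`. -/
def IsMaximalMatching (G : SimpleGraph V) (M : Set (Sym2 V)) : Prop :=
  IsMatchingSet G M ∧ ∀ M' : Set (Sym2 V), IsMatchingSet G M' → M ⊆ M' → M' = M

/-!
Removing the edges of `M'` from `M` frees exactly the vertices `V(M')`; a matching `S` of
`G[V(M'), V ∖ V(M)]` only touches these freed vertices and vertices left unmatched by `M`, so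
`(M ∖ M') ∪ S` is a matching of `G` with `|M| - |M'| + |S|` edges.
-/

theorem mVerts_mono {M N : Set (Sym2 V)} (h : M ⊆ N) : mVerts M ⊆ mVerts N :=
  fun _ ⟨e, he, hv⟩ => ⟨e, h he, hv⟩

theorem disjoint_of_disjoint_mVerts {M N : Set (Sym2 V)}
    (h : Disjoint (mVerts M) (mVerts N)) : Disjoint M N :=
  Set.disjoint_left.mpr fun e heM heN =>
    Set.disjoint_left.mp h ⟨e, heM, e.out_fst_mem⟩ ⟨e, heN, e.out_fst_mem⟩

theorem mVerts_subset_of_subset_edgeSet_between {G : SimpleGraph V} {X Y : Set V}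
    {S : Set (Sym2 V)} (hS : S ⊆ (between G X Y).edgeSet) : mVerts S ⊆ X ∪ Y := by
  rintro v ⟨e, he, hv⟩
  induction e using Sym2.ind with
  | _ a b =>
    have hab : (between G X Y).Adj a b := hS he
    rcases Sym2.mem_iff.mp hv with rfl | rfl <;> rcases hab.2 with h | h <;> simp [h]

theorem between_le (G : SimpleGraph V) (X Y : Set V) : between G X Y ≤ G :=
  fun _ _ h => h.1

namespace IsMatchingSet

variable {G H : SimpleGraph V} {M N : Set (Sym2 V)}

theorem mono (hM : IsMatchingSet G M) (hNM : N ⊆ M) : IsMatchingSet G N :=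
  ⟨hNM.trans hM.1, hM.2.mono hNM⟩

theorem of_le (hHG : H ≤ G) (hM : IsMatchingSet H M) : IsMatchingSet G M :=
  ⟨hM.1.trans (SimpleGraph.edgeSet_mono hHG), hM.2⟩

theorem union (hM : IsMatchingSet G M) (hN : IsMatchingSet G N)
    (hMN : Disjoint (mVerts M) (mVerts N)) : IsMatchingSet G (M ∪ N) := by
  refine ⟨Set.union_subset hM.1 hN.1, ?_⟩
  rintro e (he | he) f (hf | hf) hef v hve hvf
  · exact hM.2 he hf hef v hve hvf
  · exact Set.disjoint_left.mp hMN ⟨e, he, hve⟩ ⟨f, hf, hvf⟩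
  · exact Set.disjoint_left.mp hMN ⟨f, hf, hvf⟩ ⟨e, he, hve⟩
  · exact hN.2 he hf hef v hve hvf

theorem disjoint_mVerts_diff (hM : IsMatchingSet G M) (hNM : N ⊆ M) :
    Disjoint (mVerts (M \ N)) (mVerts N) := by
  refine Set.disjoint_left.mpr ?_
  rintro v ⟨e, ⟨heM, heN⟩, hve⟩ ⟨f, hf, hvf⟩
  exact hM.2 heM (hNM hf) (fun hef => heN (hef ▸ hf)) v hve hvf

end IsMatchingSet

theorem bddAbove_matchingSizes [Finite V] (G : SimpleGraph V) :
    BddAbove {n | ∃ M : Set (Sym2 V), IsMatchingSet G M ∧ M.ncard = n} := by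
  refine ⟨(Set.univ : Set (Sym2 V)).ncard, ?_⟩
  rintro n ⟨M, -, rfl⟩
  exact Set.ncard_le_ncard (Set.subset_univ M)

theorem IsMatchingSet.ncard_le_nu [Finite V] {G : SimpleGraph V} {M : Set (Sym2 V)}
    (hM : IsMatchingSet G M) : M.ncard ≤ nu G :=
  le_csSup (bddAbove_matchingSizes G) ⟨M, hM, rfl⟩

theorem exists_isMatchingSet_ncard_eq_nu [Finite V] (G : SimpleGraph V) :
    ∃ S, IsMatchingSet G S ∧ S.ncard = nu G :=
  Nat.sSup_mem (s := {n | ∃ M : Set (Sym2 V), IsMatchingSet G M ∧ M.ncard = n})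
    ⟨0, ∅, ⟨Set.empty_subset _, Set.pairwise_empty _⟩, Set.ncard_empty _⟩
    (bddAbove_matchingSizes G)

theorem IsMatchingSet.disjoint_mVerts_diff_of_between {G : SimpleGraph V} {Y : Set V}
    {M M' S : Set (Sym2 V)} (hM : IsMatchingSet G M) (hM'M : M' ⊆ M)
    (hY : Disjoint (mVerts M) Y) (hS : S ⊆ (between G (mVerts M') Y).edgeSet) :
    Disjoint (mVerts (M \ M')) (mVerts S) := by
  refine Set.disjoint_of_subset_right (mVerts_subset_of_subset_edgeSet_between hS) ?_
  exact Set.disjoint_union_right.mpr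
    ⟨hM.disjoint_mVerts_diff hM'M, hY.mono_left (mVerts_mono Set.sdiff_subset)⟩

theorem IsMatchingSet.ncard_add_ncard_sub_ncard_le_nu [Finite V] {G : SimpleGraph V}
    {Y : Set V} {M M' S : Set (Sym2 V)} (hM : IsMatchingSet G M) (hM'M : M' ⊆ M)
    (hY : Disjoint (mVerts M) Y) (hS : IsMatchingSet (between G (mVerts M') Y) S) :
    (M.ncard : ℤ) + S.ncard - M'.ncard ≤ nu G := by
  have hdisj := hM.disjoint_mVerts_diff_of_between hM'M hY hS.1
  have hN : IsMatchingSet G ((M \ M') ∪ S) :=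
    (hM.mono Set.sdiff_subset).union (hS.of_le (between_le _ _ _)) hdisj
  have hcard : ((M \ M') ∪ S).ncard = M.ncard - M'.ncard + S.ncard := by
    rw [Set.ncard_union_eq (disjoint_of_disjoint_mVerts hdisj), Set.ncard_sdiff hM'M]
  have hM'M_card : M'.ncard ≤ M.ncard := Set.ncard_le_ncard hM'M
  have := hN.ncard_le_nu
  omega

/-- If `M` is a maximal matching of `G`, `M' ⊆ M`, `V' = V(M')`, `U = V ∖ V(M)` and
`H = G[V', U]`, then every matching `S` of `H` satisfies `μ(G) ≥ |M| + |S| − |M'|`;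
consequently `μ(G) ≥ |M| + max{0, μ(H) − |M'|}`. -/
theorem no_overestimate_via_three_aug_paths [Fintype V] (G : SimpleGraph V)
    (M M' : Set (Sym2 V)) (hM : IsMaximalMatching G M) (hM'M : M' ⊆ M)
    (V' U : Set V) (hV' : V' = mVerts M') (hU : U = Set.univ \ mVerts M)
    (H : SimpleGraph V) (hH : H = between G V' U) :
    (∀ S : Set (Sym2 V), IsMatchingSet H S →
        (M.ncard : ℤ) + (S.ncard : ℤ) - (M'.ncard : ℤ) ≤ (nu G : ℤ)) ∧
      (M.ncard : ℤ) + max 0 ((nu H : ℤ) - (M'.ncard : ℤ)) ≤ (nu G : ℤ) := by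
  subst hV' hU hH
  have hS : ∀ S, IsMatchingSet (between G (mVerts M') (Set.univ \ mVerts M)) S →
      (M.ncard : ℤ) + S.ncard - M'.ncard ≤ nu G := fun S hS =>
    hM.1.ncard_add_ncard_sub_ncard_le_nu hM'M Set.disjoint_sdiff_right hS
  refine ⟨hS, ?_⟩
  obtain ⟨S, hSmatch, hSnu⟩ := exists_isMatchingSet_ncard_eq_nu (between G _ _)
  have hSbound := hS S hSmatch
  have hMnu : M.ncard ≤ nu G := hM.1.ncard_le_nu
  omega
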